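/- arXiv:1302.1629 — 2 statements merged into one kernel-verified Lean document; each statement's English description precedes it below -/
import Mathlib

section
/- In the root system of type C_l with fundamental roots r_1,...,r_l (long root r_l), the Coxeter element w = w_1 w_2 ... w_l satisfies w(r_i) = r_{i+1} for 1 ≤ i ≤ l-2 and w(r_{l-1}) = r_1 + r_2 + ... + r_l. -/
/-
In the coordinates `r i = e_{i-1} - e_i`, `r l = 2 e_{l-1}`, the reflection `w_i` (`i < l`)
swaps the coordinates `i-1` and `i`, and `w_l` negates the last coordinate. Composing them,
`w = w_1 ⋯ w_l` is the signed cyclic shift `(x_0, …, x_{l-1}) ↦ (-x_{l-1}, x_0, …, x_{l-2})`,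
so `w e_k = e_{k+1}` for `k + 1 < l` and `w e_{l-1} = -e_0`. Hence `w (r i) = r (i+1)` for
`i ≤ l - 2`, and `w (r_{l-1}) = e_0 + e_{l-1}`, which is the telescoping sum
`∑_{0 < i < l} (e_{i-1} - e_i) + 2 e_{l-1}` of all fundamental roots.
-/

open Matrix

/-- The standard basis vector `e k` of `ℝ^n` (0-indexed). -/
noncomputable def basisVec (n k : ℕ) : Fin n → ℝ := fun j => if (j : ℕ) = k then 1 else 0

/-- Reflection through the hyperplane perpendicular to `v`. -/
noncomputable def reflect {n : ℕ} (v : Fin n → ℝ) (x : Fin n → ℝ) : Fin n → ℝ :=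
  x - (2 * (v ⬝ᵥ x) / (v ⬝ᵥ v)) • v

lemma basisVec_eq_single {n k : ℕ} (hk : k < n) : basisVec n k = Pi.single ⟨k, hk⟩ 1 := by
  funext j
  simp [basisVec, Pi.single_apply, Fin.ext_iff]

lemma reflect_basisVec_sub_basisVec {n a b : ℕ} (ha : a < n) (hb : b < n) (hab : a ≠ b)
    (x : Fin n → ℝ) :
    reflect (basisVec n a - basisVec n b) x = x ∘ Equiv.swap ⟨a, ha⟩ ⟨b, hb⟩ := by
  have hab' : (⟨a, ha⟩ : Fin n) ≠ ⟨b, hb⟩ := by simpa [Fin.ext_iff] using hab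
  funext j
  simp only [reflect, basisVec_eq_single ha, basisVec_eq_single hb, sub_dotProduct,
    dotProduct_sub, single_dotProduct, Pi.sub_apply, Pi.smul_apply, Pi.single_apply,
    Function.comp_apply, Equiv.swap_apply_def, smul_eq_mul, if_neg hab', if_neg hab'.symm]
  split_ifs <;> subst_vars <;> first | contradiction | (field_simp; ring)

lemma reflect_smul_basisVec {n k : ℕ} (hk : k < n) {c : ℝ} (hc : c ≠ 0) (x : Fin n → ℝ) :
    reflect (c • basisVec n k) x = Function.update x ⟨k, hk⟩ (-x ⟨k, hk⟩) := by
  funext j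
  simp only [reflect, basisVec_eq_single hk, smul_dotProduct, dotProduct_smul, single_dotProduct,
    Pi.sub_apply, Pi.smul_apply, Pi.single_apply, Function.update_apply, smul_eq_mul]
  split_ifs <;> subst_vars <;> field_simp <;> ring

section TypeC

variable {l : ℕ} (r : ℕ → Fin l → ℝ)

/-- `reflectionProd r [k₁, …, kₘ] = w_{k₁+1} ∘ ⋯ ∘ w_{kₘ+1}`. -/
noncomputable def reflectionProd (ks : List ℕ) : (Fin l → ℝ) → Fin l → ℝ :=
  ks.foldr (fun k f => reflect (r (k + 1)) ∘ f) id

theorem reflectionProd_cons (k : ℕ) (ks : List ℕ) (x : Fin l → ℝ) :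
    reflectionProd r (k :: ks) x = reflect (r (k + 1)) (reflectionProd r ks x) := rfl

theorem reflectionProd_nil : reflectionProd r [] = id := rfl

variable {r}
variable (hr : ∀ i, 1 ≤ i → i ≤ l - 1 → r i = basisVec l (i - 1) - basisVec l i)
  (hrl : r l = (2 : ℝ) • basisVec l (l - 1))

include hr hrl in
theorem reflectionProd_range'_apply (m : ℕ) (hm : m < l) (x : Fin l → ℝ) (j : Fin l) :
    reflectionProd r (List.range' m (l - m)) x j =
      if (j : ℕ) < m then x j
      else if (j : ℕ) = m then -x ⟨l - 1, by omega⟩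
      else x ⟨j - 1, by omega⟩ := by
  induction hd : l - 1 - m generalizing m j with
  | zero =>
    obtain rfl : m = l - 1 := by omega
    rw [show l - (l - 1) = 1 by omega]
    simp only [List.range'_one, reflectionProd_cons, reflectionProd_nil, id,
      Nat.sub_add_cancel (by omega : 1 ≤ l), hrl,
      reflect_smul_basisVec (by omega : l - 1 < l) two_ne_zero, Function.update_apply,
      Fin.ext_iff]
    split_ifs <;> first | rfl | omega
  | succ d ih =>
    rw [show l - m = (l - (m + 1)) + 1 by omega, List.range'_succ, reflectionProd_cons,
      hr (m + 1) (by omega) (by omega), Nat.add_sub_cancel,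
      reflect_basisVec_sub_basisVec (by omega) (by omega) (by omega), Function.comp_apply,
      ih (m + 1) (by omega) _ (by omega)]
    obtain ⟨j, hj⟩ := j
    obtain hjm | rfl | rfl | hjm : j < m ∨ j = m ∨ j = m + 1 ∨ m + 1 < j := by omega
    · rw [Equiv.swap_apply_of_ne_of_ne (by simp; omega) (by simp; omega)]
      simp [hjm, show j < m + 1 by omega]
    · rw [Equiv.swap_apply_left]
      simp
    · rw [Equiv.swap_apply_right]
      simp
    · rw [Equiv.swap_apply_of_ne_of_ne (by simp; omega) (by simp; omega)]
      simp [show ¬j < m by omega, show j ≠ m by omega, show ¬j < m + 1 by omega,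
        show j ≠ m + 1 by omega]

include hr hrl in
theorem reflectionProd_range_apply (hl : 0 < l) (x : Fin l → ℝ) (j : Fin l) :
    reflectionProd r (List.range l) x j =
      if (j : ℕ) = 0 then -x ⟨l - 1, by omega⟩ else x ⟨j - 1, by omega⟩ := by
  simpa [List.range_eq_range'] using reflectionProd_range'_apply hr hrl 0 hl x j

include hr in
theorem sum_Icc_one_eq_basisVec_sub (m : ℕ) (hm : m ≤ l - 1) :
    ∑ k ∈ Finset.Icc 1 m, r k = basisVec l 0 - basisVec l m := by
  induction m with
  | zero => simp
  | succ m ih =>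
    rw [Finset.sum_Icc_succ_top (by omega), ih (by omega), hr (m + 1) (by omega) hm,
      Nat.add_sub_cancel]
    abel

include hr hrl in
theorem sum_Icc_one_eq_basisVec_add (hl : 0 < l) :
    ∑ k ∈ Finset.Icc 1 l, r k = basisVec l 0 + basisVec l (l - 1) := by
  obtain ⟨n, rfl⟩ : ∃ n, l = n + 1 := ⟨l - 1, by omega⟩
  rw [Finset.sum_Icc_succ_top (by omega), sum_Icc_one_eq_basisVec_sub hr n (by omega), hrl,
    Nat.add_sub_cancel, two_smul]
  abel

end TypeC

/-- Type `C_l`, realized in `ℝ^l` with fundamental roots `r i = e_{i-1} - e_i` for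
`1 ≤ i ≤ l-1` and the long root `r l = 2 e_{l-1}` (double bond between `r_{l-1}` and
`r_l`).  The Coxeter element `w = w_1 w_2 ⋯ w_l` satisfies `w (r i) = r (i+1)` for
`1 ≤ i ≤ l-2` and `w (r_{l-1}) = r_1 + r_2 + ⋯ + r_l`. -/
theorem stmt_7 (l : ℕ) (hl : 2 ≤ l)
    (r : ℕ → Fin l → ℝ)
    (hr : ∀ i, 1 ≤ i → i ≤ l - 1 → r i = basisVec l (i - 1) - basisVec l i)
    (hrl : r l = (2 : ℝ) • basisVec l (l - 1))
    (w : (Fin l → ℝ) → (Fin l → ℝ))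
    (hw : w = (List.range l).foldr (fun k f => reflect (r (k + 1)) ∘ f) id) :
    (∀ i, 1 ≤ i → i ≤ l - 2 → w (r i) = r (i + 1)) ∧
    w (r (l - 1)) = ∑ k ∈ Finset.Icc 1 l, r k := by
  have hw_apply (x : Fin l → ℝ) (j : Fin l) :
      w x j = if (j : ℕ) = 0 then -x ⟨l - 1, by omega⟩ else x ⟨j - 1, by omega⟩ :=
    hw ▸ reflectionProd_range_apply hr hrl (by omega) x j
  refine ⟨fun i hi₁ hi₂ => funext fun j => ?_, funext fun j => ?_⟩
  · rw [hw_apply, hr i hi₁ (by omega), hr (i + 1) (by omega) (by omega)]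
    simp only [Pi.sub_apply, basisVec]
    split_ifs <;> first | omega | norm_num
  · rw [sum_Icc_one_eq_basisVec_add hr hrl (by omega), hw_apply, hr (l - 1) (by omega) le_rfl]
    simp only [Pi.sub_apply, Pi.add_apply, basisVec]
    split_ifs <;> first | omega | norm_num
end

section
/- In the root system of type A_{2n} with fundamental roots r_1,...,r_{2n}, the element w = (w_n w_{n+1} w_n)(w_{n-1} w_{n+2})...(w_1 w_{2n}) satisfies w(r_{n-k}) = r_{n-k-1} for 1 ≤ k ≤ n-2 and w(r_n) = r_{n-1} + r_n. Consequently w^i(r_n) = r_n + r_{n-1} + ... + r_{n-i} for 0 ≤ i ≤ n-2. -/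
open Matrix

/-!
Every reflection `w_i` swaps the basis vectors `e_{i-1}` and `e_i`, so `w` permutes the basis
vectors. Following `e_c` through the factors of `w` (rightmost first), the pairs
`w_k w_{2n+1-k}` push `e_c` down to `e_{c-1}` for `1 ≤ c ≤ n - 1` and fix `e_n`, and the final
`w_n w_{n+1} w_n` swaps `e_{n-1}` with `e_{n+1}`, which does not affect these vectors. Hence
`w (e_c - e_n) = e_{c-1} - e_n`, and `w^i (r_n) = e_{n-1-i} - e_n` is the telescoping sum
`r_n + ⋯ + r_{n-i}`.
-/

lemma basisVec_of_lt {N a : ℕ} (ha : a < N) : basisVec N a = Pi.single ⟨a, ha⟩ 1 := by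
  ext j
  simp [basisVec, Pi.single_apply, Fin.ext_iff]

lemma basisVec_dotProduct {N a : ℕ} (ha : a < N) (x : Fin N → ℝ) :
    basisVec N a ⬝ᵥ x = x ⟨a, ha⟩ := by
  rw [basisVec_of_lt ha, single_dotProduct, one_mul]

lemma reflect_sub {N : ℕ} (v x y : Fin N → ℝ) :
    reflect v (x - y) = reflect v x - reflect v y := by
  simp only [reflect, dotProduct_sub, mul_sub, sub_div, sub_smul]
  abel

lemma reflect_basisVec {N a b : ℕ} (ha : a < N) (hb : b < N) (hab : a ≠ b) (c : ℕ) :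
    reflect (basisVec N a - basisVec N b) (basisVec N c) =
      basisVec N (Equiv.swap a b c) := by
  have hdot (x : Fin N → ℝ) :
      (basisVec N a - basisVec N b) ⬝ᵥ x = x ⟨a, ha⟩ - x ⟨b, hb⟩ := by
    rw [sub_dotProduct, basisVec_dotProduct ha, basisVec_dotProduct hb]
  ext j
  simp only [reflect, hdot, Pi.sub_apply, Pi.smul_apply, smul_eq_mul,
    basisVec, Equiv.swap_apply_def]
  split_ifs <;> first | omega | norm_num

lemma List.foldr_comp_eq_comp {α ι : Type*} (g : ι → α → α) (a : α → α) (l : List ι) :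
    l.foldr (fun k f => g k ∘ f) a = l.foldr (fun k f => g k ∘ f) id ∘ a := by
  induction l with
  | nil => rfl
  | cons k l ih => simp only [List.foldr_cons, ih]; rfl

/-- The product `(w_{n-1} w_{n+2}) ⋯ (w_{n-m} w_{n+m+1})`. -/
noncomputable def twistedChain (n : ℕ) (r : ℕ → Fin (2 * n + 1) → ℝ) (m : ℕ) :
    (Fin (2 * n + 1) → ℝ) → (Fin (2 * n + 1) → ℝ) :=
  (List.range m).foldr (fun k f => reflect (r (n - 1 - k)) ∘ reflect (r (n + 2 + k)) ∘ f) id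

noncomputable def twistedCoxeter (n : ℕ) (r : ℕ → Fin (2 * n + 1) → ℝ) :
    (Fin (2 * n + 1) → ℝ) → (Fin (2 * n + 1) → ℝ) :=
  reflect (r n) ∘ reflect (r (n + 1)) ∘ reflect (r n) ∘ twistedChain n r (n - 1)

section TwistedCoxeter

variable {n : ℕ} (r : ℕ → Fin (2 * n + 1) → ℝ)

lemma reflect_root_basisVec
    (hr : ∀ i, 1 ≤ i → i ≤ 2 * n →
      r i = basisVec (2 * n + 1) (i - 1) - basisVec (2 * n + 1) i)
    {i : ℕ} (hi₁ : 1 ≤ i) (hi₂ : i ≤ 2 * n) (c : ℕ) :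
    reflect (r i) (basisVec (2 * n + 1) c) = basisVec (2 * n + 1) (Equiv.swap (i - 1) i c) := by
  rw [hr i hi₁ hi₂, reflect_basisVec (by omega) (by omega) (by omega)]

lemma twistedChain_zero : twistedChain n r 0 = id := rfl

lemma twistedChain_succ (m : ℕ) :
    twistedChain n r (m + 1) =
      twistedChain n r m ∘ reflect (r (n - 1 - m)) ∘ reflect (r (n + 2 + m)) := by
  rw [twistedChain, List.range_succ, List.foldr_append, List.foldr_cons, List.foldr_nil]
  exact List.foldr_comp_eq_comp (fun k => reflect (r (n - 1 - k)) ∘ reflect (r (n + 2 + k))) _ _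

lemma twistedChain_sub (m : ℕ) (x y : Fin (2 * n + 1) → ℝ) :
    twistedChain n r m (x - y) = twistedChain n r m x - twistedChain n r m y := by
  induction m generalizing x y with
  | zero => rfl
  | succ m ih => simp only [twistedChain_succ, Function.comp_apply, reflect_sub, ih]

lemma twistedCoxeter_sub (x y : Fin (2 * n + 1) → ℝ) :
    twistedCoxeter n r (x - y) = twistedCoxeter n r x - twistedCoxeter n r y := by
  simp only [twistedCoxeter, Function.comp_apply, twistedChain_sub, reflect_sub]

/-- `e_{n-1-m}` is excluded: the chain sends it up to `e_{n-1}`. -/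
lemma twistedChain_basisVec
    (hr : ∀ i, 1 ≤ i → i ≤ 2 * n →
      r i = basisVec (2 * n + 1) (i - 1) - basisVec (2 * n + 1) i)
    {m : ℕ} (hm : m ≤ n - 1) {c : ℕ} (hc : c ≤ n) (hcm : c ≠ n - 1 - m) :
    twistedChain n r m (basisVec (2 * n + 1) c) =
      basisVec (2 * n + 1) (if n - m ≤ c ∧ c < n then c - 1 else c) := by
  induction m generalizing c with
  | zero => simp only [twistedChain_zero, id]; congr 1; split_ifs <;> omega
  | succ m ih =>
    simp only [twistedChain_succ, Function.comp_apply]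
    rw [reflect_root_basisVec r hr (by omega) (by omega),
      Equiv.swap_apply_of_ne_of_ne (by omega) (by omega),
      reflect_root_basisVec r hr (by omega) (by omega)]
    by_cases hc' : c = n - 1 - m
    · rw [hc', Equiv.swap_apply_right, ih (by omega) (by omega) (by omega)]
      congr 1; split_ifs <;> omega
    · rw [Equiv.swap_apply_of_ne_of_ne (by omega) hc', ih (by omega) hc hc']
      congr 1; split_ifs <;> omega

lemma twistedCoxeter_basisVec
    (hr : ∀ i, 1 ≤ i → i ≤ 2 * n →
      r i = basisVec (2 * n + 1) (i - 1) - basisVec (2 * n + 1) i)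
    {c : ℕ} (hc₁ : 1 ≤ c) (hc₂ : c ≤ n) :
    twistedCoxeter n r (basisVec (2 * n + 1) c) =
      basisVec (2 * n + 1) (if c < n then c - 1 else c) := by
  simp only [twistedCoxeter, Function.comp_apply]
  rw [twistedChain_basisVec r hr le_rfl hc₂ (by omega)]
  simp only [reflect_root_basisVec r hr (by omega : 1 ≤ n) (by omega),
    reflect_root_basisVec r hr (by omega : 1 ≤ n + 1) (by omega), Nat.add_sub_cancel]
  congr 1
  simp only [Equiv.swap_apply_def]
  split_ifs <;> omega

lemma sum_Icc_roots
    (hr : ∀ i, 1 ≤ i → i ≤ 2 * n →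
      r i = basisVec (2 * n + 1) (i - 1) - basisVec (2 * n + 1) i)
    {i : ℕ} (hi : i < n) :
    ∑ k ∈ Finset.Icc (n - i) n, r k =
      basisVec (2 * n + 1) (n - 1 - i) - basisVec (2 * n + 1) n := by
  induction i with
  | zero => simp [hr n (by omega) (by omega)]
  | succ i ih =>
    rw [← Finset.insert_Icc_add_one_left_eq_Icc (by omega : n - (i + 1) ≤ n),
      Finset.sum_insert (by simp), show n - (i + 1) + 1 = n - i by omega, ih (by omega),
      hr _ (by omega) (by omega), show n - (i + 1) - 1 = n - 1 - (i + 1) by omega,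
      show n - (i + 1) = n - 1 - i by omega]
    abel

end TwistedCoxeter

/-- Type `A_{2n}` with fundamental roots `r i = e_{i-1} - e_i` in `ℝ^{2n+1}`:
the twisted Coxeter element `w = (w_n w_{n+1} w_n)(w_{n-1} w_{n+2}) ⋯ (w_1 w_{2n})`
satisfies `w (r_{n-k}) = r_{n-k-1}` for `1 ≤ k ≤ n-2` and `w (r n) = r_{n-1} + r_n`;
consequently `w^i (r n) = r_n + r_{n-1} + ⋯ + r_{n-i}` for `0 ≤ i ≤ n-2`. -/
theorem stmt_11 (n : ℕ) (hn : 2 ≤ n)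
    (r : ℕ → Fin (2 * n + 1) → ℝ)
    (hr : ∀ i, 1 ≤ i → i ≤ 2 * n →
      r i = basisVec (2 * n + 1) (i - 1) - basisVec (2 * n + 1) i)
    (w : (Fin (2 * n + 1) → ℝ) → (Fin (2 * n + 1) → ℝ))
    (hw : w = reflect (r n) ∘ reflect (r (n + 1)) ∘ reflect (r n) ∘
      (List.range (n - 1)).foldr
        (fun k f => reflect (r (n - 1 - k)) ∘ reflect (r (n + 2 + k)) ∘ f) id) :
    (∀ k, 1 ≤ k → k ≤ n - 2 → w (r (n - k)) = r (n - k - 1)) ∧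
    w (r n) = r (n - 1) + r n ∧
    ∀ i, i ≤ n - 2 → w^[i] (r n) = ∑ k ∈ Finset.Icc (n - i) n, r k := by
  change w = twistedCoxeter n r at hw
  subst hw
  have hroot : ∀ c, 1 ≤ c → c < n → twistedCoxeter n r
      (basisVec (2 * n + 1) c - basisVec (2 * n + 1) n) =
        basisVec (2 * n + 1) (c - 1) - basisVec (2 * n + 1) n := fun c hc₁ hc₂ => by
    rw [twistedCoxeter_sub, twistedCoxeter_basisVec r hr hc₁ hc₂.le,
      twistedCoxeter_basisVec r hr (by omega) le_rfl, if_pos hc₂, if_neg (lt_irrefl n)]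
  refine ⟨fun k hk₁ hk₂ => ?_, ?_, fun i hi => ?_⟩
  · rw [hr _ (by omega) (by omega), hr _ (by omega) (by omega), twistedCoxeter_sub,
      twistedCoxeter_basisVec r hr (by omega) (by omega),
      twistedCoxeter_basisVec r hr (by omega) (by omega), if_pos (by omega), if_pos (by omega)]
  · rw [hr n (by omega) (by omega), hroot _ (by omega) (by omega),
      hr (n - 1) (by omega) (by omega)]
    abel
  · rw [sum_Icc_roots r hr (by omega)]
    induction i with
    | zero => rw [hr n (by omega) (by omega)]; rfl
    | succ i ih =>
      rw [Function.iterate_succ_apply', ih (by omega), hroot _ (by omega) (by omega)]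
      rfl
end
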